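/- Let Δ be a probabilistic one-counter automaton with control states Q, |Q| = k. If pXᵐZ ∈ INC, then m < k. -/
import Mathlib


open scoped ENNReal

noncomputable section

/-- A probabilistic labelled transition system (pLTS): states `S`, alphabet `A`,
and a transition relation into probability distributions (`PMF`s) on `S`. -/
structure PLTS (S : Type) (A : Type) where
  Tr : S → A → PMF S → Prop

namespace PLTS

variable {S A : Type}

/-- The mass that a distribution assigns to a set of states. -/
def mass (d : PMF S) (E : Set S) : ℝ≥0∞ := ∑' s : E, d s

/-- Two distributions are `r`-equivalent if they assign equal mass to every
`r`-equivalence class (for an equivalence `r`, the classes are the sets `{t | r s t}`). -/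
def REquiv (r : S → S → Prop) (d d' : PMF S) : Prop :=
  ∀ s : S, mass d {t | r s t} = mass d' {t | r s t}

/-- An equivalence relation is a bisimulation if related states can match
each other's transitions with `r`-equivalent target distributions. -/
def IsBisimulation (L : PLTS S A) (r : S → S → Prop) : Prop :=
  Equivalence r ∧
    ∀ s t, r s t → ∀ a d, L.Tr s a d → ∃ d', L.Tr t a d' ∧ REquiv r d d'

/-- Bisimilarity: the union of all bisimulation relations. -/
def Bisim (L : PLTS S A) (s t : S) : Prop :=
  ∃ r, L.IsBisimulation r ∧ r s t

/-- The bisimulation approximants `∼ₙ`. -/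
def approx (L : PLTS S A) : ℕ → S → S → Prop
  | 0 => fun _ _ => True
  | n + 1 => fun s t =>
      (∀ a d, L.Tr s a d → ∃ d', L.Tr t a d' ∧ REquiv (L.approx n) d d') ∧
      (∀ a d', L.Tr t a d' → ∃ d, L.Tr s a d ∧ REquiv (L.approx n) d d')

/-- A pLTS is finitely branching if every state has finitely many transitions. -/
def FinBranching (L : PLTS S A) : Prop :=
  ∀ s, {p : A × PMF S | L.Tr s p.1 p.2}.Finite

/-- One-step successor relation: `s → s'` iff some transition of `s` gives `s'`
positive probability. -/
def Step (L : PLTS S A) (s s' : S) : Prop :=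
  ∃ a d, L.Tr s a d ∧ d s' ≠ 0

end PLTS

/-- The rules of a probabilistic pushdown automaton (pPDA) with control states
`Q`, stack alphabet `Γ`, input alphabet `A`: a rule `qX –a↪ d` is a tuple
`(q, X, a, d)` where `d` is a distribution over pairs of a control state and
a string of length at most two that replaces the top symbol. -/
def PPDARules (Q Γ A : Type) := Q → Γ → A → PMF (Q × List Γ) → Prop

/-- Well-formedness of pPDA rules: target distributions are supported on
configurations `(p, α)` with `|α| ≤ 2` (i.e. `α ∈ Γ^{≤2}`). -/
def PPDAWf {Q Γ A : Type} (Δ : PPDARules Q Γ A) : Prop :=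
  ∀ q X a d, Δ q X a d → ∀ p (α : List Γ), d (p, α) ≠ 0 → α.length ≤ 2

/-- A nondeterministic PDA is a pPDA all of whose rules use Dirac distributions. -/
def IsPDA {Q Γ A : Type} (Δ : PPDARules Q Γ A) : Prop :=
  ∀ q X a d, Δ q X a d → ∃ c, d = PMF.pure c

/-- The pLTS induced by a pPDA on configurations `Q × Γ*`: a rule `qX –a↪ d`
and a tail `β ∈ Γ*` induce the transition `qXβ –a→ d'` with `d'(pαβ) = d(pα)`;
configurations with empty stack have no transitions. -/
def PPDARules.plts {Q Γ A : Type} (Δ : PPDARules Q Γ A) : PLTS (Q × List Γ) A where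
  Tr := fun c a d' => ∃ (q : Q) (X : Γ) (β : List Γ) (d : PMF (Q × List Γ)),
    c = (q, X :: β) ∧ Δ q X a d ∧ d' = d.map (fun pα => (pα.1, pα.2 ++ β))

/-- The stack alphabet `{X, Z}` of a one-counter automaton. -/
inductive OCSym : Type
  | X : OCSym
  | Z : OCSym
deriving DecidableEq

/-- Well-formedness of pOCA rules: `Z` always and only occurs at the bottom of
the stack, i.e. rules for top `X` rewrite `X` into `ε`, `X` or `XX`, and rules
for top `Z` rewrite `Z` into `Z` or `XZ`. -/
def POCAWf {Q A : Type} (Δ : PPDARules Q OCSym A) : Prop :=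
  (∀ q a d, Δ q OCSym.X a d → ∀ p (α : List OCSym), d (p, α) ≠ 0 →
      α = [] ∨ α = [OCSym.X] ∨ α = [OCSym.X, OCSym.X]) ∧
  (∀ q a d, Δ q OCSym.Z a d → ∀ p (α : List OCSym), d (p, α) ≠ 0 →
      α = [OCSym.Z] ∨ α = [OCSym.X, OCSym.Z])

/-- The configuration `pXᵐZ` of a pOCA. -/
def oconf {Q : Type} (p : Q) (m : ℕ) : Q × List OCSym :=
  (p, List.replicate m OCSym.X ++ [OCSym.Z])

/-- The finite pLTS `ℱ_Δ` underlying a pOCA: `p –a→ d'` iff there is a rule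
`pX –a↪ d` with `d'(q) = d(q,ε) + d(q,X) + d(q,XX)` for all `q`. -/
def underlying {Q A : Type} (Δ : PPDARules Q OCSym A) : PLTS Q A where
  Tr := fun p a d' => ∃ d, Δ p OCSym.X a d ∧
    ∀ q : Q, d' q = d (q, []) + d (q, [OCSym.X]) + d (q, [OCSym.X, OCSym.X])

/-- The disjoint-union pLTS of two pLTSs over the same alphabet. -/
def PLTS.sum {S₁ S₂ A : Type} (L₁ : PLTS S₁ A) (L₂ : PLTS S₂ A) :
    PLTS (S₁ ⊕ S₂) A where
  Tr := fun s a d =>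
    (∃ s₁ d₁, s = Sum.inl s₁ ∧ L₁.Tr s₁ a d₁ ∧ d = d₁.map Sum.inl) ∨
    (∃ s₂ d₂, s = Sum.inr s₂ ∧ L₂.Tr s₂ a d₂ ∧ d = d₂.map Sum.inr)

/-- `INC`: configurations `pXᵐZ` that are not related by the `k`-th
approximant (`k = |Q|`) to any state `q` of the underlying finite pLTS, in the
disjoint union of `S(Δ)` and `ℱ_Δ`. -/
def InINC {Q A : Type} [Fintype Q] (Δ : PPDARules Q OCSym A)
    (p : Q) (m : ℕ) : Prop :=
  ∀ q : Q, ¬ (Δ.plts.sum (underlying Δ)).approx (Fintype.card Q)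
      (Sum.inl (oconf p m)) (Sum.inr q)

/-- `ℓ` one-step successor moves lead from `s` to `t`. -/
def PLTS.StepN {S A : Type} (L : PLTS S A) : ℕ → S → S → Prop
  | 0, s, t => s = t
  | n + 1, s, t => ∃ u, L.Step s u ∧ L.StepN n u t

/-- `dist(c)`: the least number of one-step successor moves in `S(Δ)` leading
from the configuration `c` to some configuration in `INC` (and `∞ = ⊤` if
`INC` is unreachable). -/
def distINC {Q A : Type} [Fintype Q] (Δ : PPDARules Q OCSym A)
    (c : Q × List OCSym) : ℕ∞ :=
  sInf {n : ℕ∞ | ∃ ℓ : ℕ, n = (ℓ : ℕ∞) ∧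
    ∃ (p : Q) (m : ℕ), Δ.plts.StepN ℓ c (oconf p m) ∧ InINC Δ p m}

section Aux

theorem approx_equivalence {S A : Type} (L : PLTS S A) :
    ∀ n, Equivalence (L.approx n)
  | 0 => ⟨fun _ => trivial, fun _ => trivial, fun _ _ => trivial⟩
  | n + 1 => by
    constructor
    · intro s
      exact ⟨fun a d h => ⟨d, h, fun _ => rfl⟩, fun a d h => ⟨d, h, fun _ => rfl⟩⟩
    · rintro s t ⟨h1, h2⟩
      refine ⟨fun a d hd => ?_, fun a d hd => ?_⟩
      · obtain ⟨d', hd', he⟩ := h2 a d hd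
        exact ⟨d', hd', fun u => (he u).symm⟩
      · obtain ⟨d', hd', he⟩ := h1 a d hd
        exact ⟨d', hd', fun u => (he u).symm⟩
    · rintro s t u ⟨h1, h2⟩ ⟨h3, h4⟩
      refine ⟨fun a d hd => ?_, fun a d hd => ?_⟩
      · obtain ⟨d', hd', he⟩ := h1 a d hd
        obtain ⟨d'', hd'', he'⟩ := h3 a d' hd'
        exact ⟨d'', hd'', fun v => (he v).trans (he' v)⟩
      · obtain ⟨d', hd', he⟩ := h4 a d hd
        obtain ⟨d'', hd'', he'⟩ := h2 a d' hd'
        exact ⟨d'', hd'', fun v => (he' v).trans (he v)⟩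

theorem mass_map {S T : Type} (d : PMF S) (g : S → T) (E : Set T) :
    PLTS.mass (d.map g) E = ∑' x, Set.indicator (g ⁻¹' E) d x := by
  have h1 : ∀ {U : Type} (e : PMF U) (F : Set U),
      PLTS.mass e F = e.toOuterMeasure F := by
    intro U e F
    rw [PMF.toOuterMeasure_apply, PLTS.mass, tsum_subtype]
  rw [h1, PMF.toOuterMeasure_map_apply, PMF.toOuterMeasure_apply]

theorem mass_map_congr {S T : Type} (d : PMF S) (g₁ g₂ : S → T) (E : Set T)
    (h : ∀ x, d x ≠ 0 → (g₁ x ∈ E ↔ g₂ x ∈ E)) :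
    PLTS.mass (d.map g₁) E = PLTS.mass (d.map g₂) E := by
  classical
  rw [mass_map, mass_map]
  refine tsum_congr fun x => ?_
  by_cases hx : d x = 0
  · simp only [Set.indicator_apply]
    split_ifs <;> simp [hx]
  · simp only [Set.indicator_apply, Set.mem_preimage]
    exact if_congr (h x hx) rfl rfl

theorem map_fst_eq {Q : Type} (d : PMF (Q × List OCSym))
    (hd : ∀ p α, d (p, α) ≠ 0 → α = [] ∨ α = [OCSym.X] ∨ α = [OCSym.X, OCSym.X])
    (q : Q) :
    d.map Prod.fst q = d (q, []) + d (q, [OCSym.X]) + d (q, [OCSym.X, OCSym.X]) := by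
  classical
  rw [PMF.map_apply]
  rw [tsum_eq_sum
    (s := ({(q, []), (q, [OCSym.X]), (q, [OCSym.X, OCSym.X])} :
      Finset (Q × List OCSym))) ?_]
  · rw [Finset.sum_insert (by simp), Finset.sum_insert (by simp),
      Finset.sum_singleton]
    simp [add_assoc]
  · intro b hb
    by_cases hdb : d b = 0
    · simp [hdb]
    · rw [if_neg]
      intro hq
      apply hb
      have := hd b.1 b.2 (by rwa [Prod.mk.eta])
      simp only [Finset.mem_insert, Finset.mem_singleton]
      rcases this with h' | h' | h' <;>
        · rw [← Prod.mk.eta (p := b), ← hq, h']; simp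

theorem key_approx {Q A : Type} (Δ : PPDARules Q OCSym A) (hwf : POCAWf Δ) :
    ∀ n (q : Q) (j : ℕ), n ≤ j →
      (Δ.plts.sum (underlying Δ)).approx n (Sum.inl (oconf q j)) (Sum.inr q)
  | 0, q, j, _ => trivial
  | n + 1, q, j, hnj => by
    obtain ⟨j', rfl⟩ : ∃ j', j = j' + 1 := ⟨j - 1, by omega⟩
    set L := Δ.plts.sum (underlying Δ) with hL
    set β : List OCSym := List.replicate j' OCSym.X ++ [OCSym.Z] with hβ
    have hconf : oconf q (j' + 1) = (q, OCSym.X :: β) := by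
      simp [oconf, hβ, List.replicate_succ]
    have hE := approx_equivalence L n
    -- the central mass-matching fact
    have hcls : ∀ (d : PMF (Q × List OCSym)),
        (∀ p α, d (p, α) ≠ 0 → α = [] ∨ α = [OCSym.X] ∨ α = [OCSym.X, OCSym.X]) →
        PLTS.REquiv (L.approx n)
          (d.map (fun pα => Sum.inl (pα.1, pα.2 ++ β)))
          (d.map (fun pα => Sum.inr pα.1)) := by
      intro d hd s
      refine mass_map_congr d _ _ _ fun x hx => ?_
      have hα := hd x.1 x.2 (by rwa [Prod.mk.eta])
      have hrel : L.approx n (Sum.inl (x.1, x.2 ++ β)) (Sum.inr x.1) := by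
        rcases hα with h' | h' | h' <;> rw [h']
        · have : (x.1, ([] : List OCSym) ++ β) = oconf x.1 j' := by
            simp [oconf, hβ]
          rw [this]; exact key_approx Δ hwf n x.1 j' (by omega)
        · have : (x.1, [OCSym.X] ++ β) = oconf x.1 (j' + 1) := by
            simp [oconf, hβ, List.replicate_succ]
          rw [this]; exact key_approx Δ hwf n x.1 (j' + 1) (by omega)
        · have : (x.1, [OCSym.X, OCSym.X] ++ β) = oconf x.1 (j' + 2) := by
            simp [oconf, hβ, List.replicate_succ]
          rw [this]; exact key_approx Δ hwf n x.1 (j' + 2) (by omega)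
      simp only [Set.mem_setOf_eq]
      exact ⟨fun hs => hE.trans hs hrel, fun hs => hE.trans hs (hE.symm hrel)⟩
    constructor
    · rintro a D hD
      rcases hD with ⟨c₁, d₁, hc, htr, rfl⟩ | ⟨s₂, d₂, hc, _, _⟩
      swap
      · exact absurd hc (by simp)
      obtain rfl : oconf q (j' + 1) = c₁ := by injection hc
      obtain ⟨q₀, X₀, β₀, d, hc2, hrule, rfl⟩ := htr
      rw [hconf] at hc2
      obtain ⟨hq, hX, hb⟩ : q = q₀ ∧ OCSym.X = X₀ ∧ β = β₀ := by
        have h1 := congrArg Prod.fst hc2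
        have h2 := congrArg Prod.snd hc2
        simp at h1 h2
        exact ⟨h1, h2.1, h2.2⟩
      subst hq; subst hb
      rw [← hX] at hrule
      refine ⟨(d.map Prod.fst).map Sum.inr,
        Or.inr ⟨q, d.map Prod.fst, rfl,
          ⟨d, hrule, fun q' => map_fst_eq d (hwf.1 q a d hrule) q'⟩, rfl⟩, ?_⟩
      rw [PMF.map_comp, PMF.map_comp]
      exact hcls d (hwf.1 q a d hrule)
    · rintro a D hD
      rcases hD with ⟨c₁, d₁, hc, _, _⟩ | ⟨s₂, d₂, hc, htr, rfl⟩
      · exact absurd hc (by simp)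
      obtain rfl : q = s₂ := by injection hc
      obtain ⟨d, hrule, hform⟩ := htr
      have hd2 : d₂ = d.map Prod.fst :=
        PMF.ext fun q' => (hform q').trans (map_fst_eq d (hwf.1 q a d hrule) q').symm
      subst hd2
      refine ⟨(d.map (fun pα => (pα.1, pα.2 ++ β))).map Sum.inl,
        Or.inl ⟨oconf q (j' + 1), _, rfl,
          ⟨q, OCSym.X, β, d, hconf, hrule, rfl⟩, rfl⟩, ?_⟩
      rw [PMF.map_comp, PMF.map_comp]
      exact fun s => (hcls d (hwf.1 q a d hrule) s)

end Aux

/-- For a pOCA `Δ` with `k = |Q|`: if `pXᵐZ ∈ INC` then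
`m < k`. -/
theorem inINC_lt_card (Q A : Type) [Fintype Q] [Fintype A]
    (Δ : PPDARules Q OCSym A) (hwf : POCAWf Δ) (p : Q) (m : ℕ)
    (h : InINC Δ p m) :
    m < Fintype.card Q := by
  by_contra hlt
  push_neg at hlt
  exact h p (key_approx Δ hwf (Fintype.card Q) p m hlt)
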